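/- arXiv:2208.11528 — 2 statements merged into one kernel-verified Lean document; each statement's English description precedes it below -/
import Mathlib

section
/- Branching property: let f be an excursion, let u,v ∈ [0,1] with u ≺_f v and f(u−)=f(v−). Define g(t)=f(t) for t∉[u,v) and g(t)=f(u−) for t∈[u,v); define h(t)=f(u+t(v−u))−f(u−) for t∈[0,1) and h(1)=0. Then g and h are excursions, and for all s,t ∈ [0,1) and all a,b ∈ [0,1]∖[u,v): d_L[f](a,b)=d_L[g](a,b), d_L[f](u+s(v−u), u+t(v−u))=d_L[h](s,t), and d_L[f](u+s(v−u), a)=d_L[g](a,u)+d_L[h](s,1). The same three identities hold with d_T in place of d_L. -/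
open Set Filter Topology
open scoped Classical

noncomputable section

/-- Left limit of `f` at `t`, with the convention `f(0−) = 0`. -/
def lm (f : ℝ → ℝ) (t : ℝ) : ℝ := if t = 0 then 0 else Function.leftLim f t

/-- The jump `Δ_t(f) = f t − f(t−)`. -/
def jump (f : ℝ → ℝ) (t : ℝ) : ℝ := f t - lm f t

/-- `inf_{[s,t]} f`. -/
def infIcc (f : ℝ → ℝ) (s t : ℝ) : ℝ := sInf (f '' Icc s t)

/-- An excursion: a càdlàg function on `[0,1]`, nonnegative, vanishing at `1` (and
extended by `0` outside `[0,1]`), all of whose jumps are nonnegative. -/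
structure IsExcursion (f : ℝ → ℝ) : Prop where
  nonneg : ∀ t ∈ Icc (0:ℝ) 1, 0 ≤ f t
  zero_outside : ∀ t, t ∉ Icc (0:ℝ) 1 → f t = 0
  rightCont : ∀ t ∈ Ico (0:ℝ) 1, Tendsto f (𝓝[>] t) (𝓝 (f t))
  leftLimEx : ∀ t ∈ Ioc (0:ℝ) 1, Tendsto f (𝓝[<] t) (𝓝 (Function.leftLim f t))
  one : f 1 = 0
  jump_nonneg : ∀ t ∈ Icc (0:ℝ) 1, 0 ≤ jump f t

/-- The genealogical relation `s ⪯_f t` : `s ≤ t` and `f(s−) ≤ inf_{[s,t]} f`. -/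
def pre (f : ℝ → ℝ) (s t : ℝ) : Prop := s ≤ t ∧ lm f s ≤ infIcc f s t

/-- `x_s^t(f) = 1_{s ≤ t} · max(inf_{[s,t]} f − f(s−), 0)`. -/
def xst (f : ℝ → ℝ) (s t : ℝ) : ℝ := if s ≤ t then max (infIcc f s t - lm f s) 0 else 0

/-- The most recent common ancestor `s ∧_f t`. -/
def mrca (f : ℝ → ℝ) (s t : ℝ) : ℝ := sSup {r : ℝ | 0 ≤ r ∧ pre f r s ∧ pre f r t}

/-- `δ_t(a,b) = min(|a−b|, Δ_t(f) − |a−b|)`, the circle pseudo-distance on `[0, Δ_t(f)]`. -/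
def cdel (f : ℝ → ℝ) (t a b : ℝ) : ℝ := min |a - b| (jump f t - |a - b|)

/-- `d_O(s,t) = ∑_{s ≺_f r ⪯_f t} δ_r(0, x_r^t)`. -/
def dO (f : ℝ → ℝ) (s t : ℝ) : ℝ :=
  ∑' r : ℝ, if pre f s r ∧ s < r ∧ pre f r t then cdel f r 0 (xst f r t) else 0

/-- `d_T(s,t) = f t − inf_{[s,t]} f − ∑_{s ≺_f r ⪯_f t} x_r^t`, intended for `s ⪯_f t`. -/
def dTanc (f : ℝ → ℝ) (s t : ℝ) : ℝ :=
  f t - infIcc f s t - ∑' r : ℝ, if pre f s r ∧ s < r ∧ pre f r t then xst f r t else 0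

/-- The looptree pseudo-distance `d_L[f]`. -/
def dL (f : ℝ → ℝ) (s t : ℝ) : ℝ :=
  cdel f (mrca f s t) (xst f (mrca f s t) s) (xst f (mrca f s t) t)
    + dO f (mrca f s t) s + dO f (mrca f s t) t

/-- The tree pseudo-distance `d_T[f]`. -/
def dT (f : ℝ → ℝ) (s t : ℝ) : ℝ := dTanc f (mrca f s t) s + dTanc f (mrca f s t) t

/-- The vernation pseudo-distance `d_V[f] = d_T[f] + 2·d_L[f]`. -/
def dV (f : ℝ → ℝ) (s t : ℝ) : ℝ := dT f s t + 2 * dL f s t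

/-- `Jf(t) = ∑_{r ⪯_f t} x_r^t(f)`. -/
def Jop (f : ℝ → ℝ) (t : ℝ) : ℝ := ∑' r : ℝ, if pre f r t then xst f r t else 0

/-- `J^ε f(t) = ∑_{r ⪯_f t, Δ_r(f) ≥ ε} x_r^t(f)`. -/
def Jeps (f : ℝ → ℝ) (ε : ℝ) (t : ℝ) : ℝ :=
  ∑' r : ℝ, if pre f r t ∧ ε ≤ jump f r then xst f r t else 0

/-- Pure jump growth (PJG) excursion: `f(t) = ∑_{r ⪯_f t} x_r^t(f)` on `[0,1]`. -/
def IsPJG (f : ℝ → ℝ) : Prop := ∀ t ∈ Icc (0:ℝ) 1, f t = Jop f t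

/-- An increasing bijection from `[0,1]` onto itself. -/
def IncBij (l : ℝ → ℝ) : Prop :=
  StrictMonoOn l (Icc (0:ℝ) 1) ∧ Set.BijOn l (Icc (0:ℝ) 1) (Icc (0:ℝ) 1)

/-- The Skorokhod distance `ρ` on functions `[0,1] → ℝ`. -/
def skor (f g : ℝ → ℝ) : ℝ :=
  sInf {c : ℝ | 0 ≤ c ∧ ∃ l : ℝ → ℝ, IncBij l ∧
    ∀ x ∈ Icc (0:ℝ) 1, |l x - x| ≤ c ∧ |f x - g (l x)| ≤ c}


/-!
Since `f ≥ f(u−) = f(v−)` on `[u,v]`, the points of `[u,v)` form the subtree of the genealogy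
`⪯_f` above `u`. Outside it, ancestors, infima and the values `x_r^t` are the same for `f` and for
the pruned function `g`, whose points of `[u,v)` carry no loop (`x_r^t(g) = 0` there); inside it,
`t ↦ u + t(v-u)` is an order isomorphism carrying the genealogy of `h` onto that of `f`, shifted
by `f(u−)`. For `p = u + s(v-u)` and `a ∉ [u,v)`, the ancestral line of `p` splits at
`ρ = u + (s ∧_h 1)(v-u)`, its last ancestor at level `f(u−)`: below `u` it is the line of `u` in
`g`, from `ρ` on it is the line of `s` in `h`, and in between it carries no mass. The common
ancestor `p ∧_f a` is `ρ` when `u ⪯_f a` (and then `a ∧_g u = u`); otherwise it lies below `u` and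
equals `a ∧_g u`.
-/

variable {φ : ℝ → ℝ}

theorem IsExcursion.apply_nonneg (hφ : IsExcursion φ) (t : ℝ) : 0 ≤ φ t := by
  by_cases ht : t ∈ Icc (0:ℝ) 1
  · exact hφ.nonneg t ht
  · rw [hφ.zero_outside t ht]

theorem IsExcursion.infIcc_le (hφ : IsExcursion φ) {p q x : ℝ} (hx : x ∈ Icc p q) :
    infIcc φ p q ≤ φ x :=
  csInf_le ⟨0, by rintro y ⟨z, -, rfl⟩; exact hφ.apply_nonneg z⟩ ⟨x, hx, rfl⟩

theorem le_infIcc {p q A : ℝ} (hpq : p ≤ q) (H : ∀ x ∈ Icc p q, A ≤ φ x) :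
    A ≤ infIcc φ p q :=
  le_csInf ((nonempty_Icc.2 hpq).image φ) (by rintro y ⟨x, hx, rfl⟩; exact H x hx)

theorem IsExcursion.infIcc_nonneg (hφ : IsExcursion φ) (p q : ℝ) : 0 ≤ infIcc φ p q := by
  by_cases hpq : p ≤ q
  · exact le_infIcc hpq fun x _ => hφ.apply_nonneg x
  · simp [infIcc, Icc_eq_empty hpq]

theorem IsExcursion.infIcc_mono (hφ : IsExcursion φ) {p q p' q' : ℝ} (hp : p' ≤ p)
    (hq : q ≤ q') (hpq : p ≤ q) : infIcc φ p' q' ≤ infIcc φ p q :=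
  le_infIcc hpq fun _ hx => hφ.infIcc_le ⟨hp.trans hx.1, hx.2.trans hq⟩

theorem IsExcursion.infIcc_eq_min (hφ : IsExcursion φ) {p q r : ℝ} (hpq : p ≤ q)
    (hqr : q ≤ r) :
    infIcc φ p r = min (infIcc φ p q) (infIcc φ q r) := by
  refine le_antisymm (le_min (hφ.infIcc_mono le_rfl hqr hpq) (hφ.infIcc_mono hpq le_rfl hqr)) ?_
  refine le_infIcc (hpq.trans hqr) fun x hx => ?_
  rcases le_total x q with hxq | hqx
  · exact (min_le_left _ _).trans (hφ.infIcc_le ⟨hx.1, hxq⟩)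
  · exact (min_le_right _ _).trans (hφ.infIcc_le ⟨hqx, hx.2⟩)

theorem IsExcursion.infIcc_self (hφ : IsExcursion φ) (r : ℝ) : infIcc φ r r = φ r :=
  le_antisymm (hφ.infIcc_le ⟨le_rfl, le_rfl⟩) (le_infIcc le_rfl fun x hx => by
    rw [le_antisymm hx.2 hx.1])

theorem lm_zero (φ : ℝ → ℝ) : lm φ 0 = 0 := if_pos rfl

theorem lm_eq_of_tendsto {t L : ℝ} (ht : t ≠ 0) (h : Tendsto φ (𝓝[<] t) (𝓝 L)) :
    lm φ t = L := by
  rw [lm, if_neg ht]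
  exact leftLim_eq_of_tendsto h

theorem IsExcursion.eventually_eq_zero (hφ : IsExcursion φ) {t : ℝ} (ht : t ∉ Ioc (0:ℝ) 1) :
    ∀ᶠ x in 𝓝[<] t, φ x = 0 := by
  rcases le_or_gt t 0 with ht0 | ht0
  · filter_upwards [self_mem_nhdsWithin] with x hx
    exact hφ.zero_outside x fun h => (lt_of_lt_of_le hx ht0).not_ge h.1
  · filter_upwards [Ioo_mem_nhdsLT (lt_of_not_ge fun h => ht ⟨ht0, h⟩)] with x hx
    exact hφ.zero_outside x fun h => hx.1.not_ge h.2

theorem IsExcursion.tendsto_nhdsLT (hφ : IsExcursion φ) (t : ℝ) :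
    Tendsto φ (𝓝[<] t) (𝓝 (lm φ t)) := by
  by_cases ht : t ∈ Ioc (0:ℝ) 1
  · rw [lm, if_neg ht.1.ne']
    exact hφ.leftLimEx t ht
  have hlim : Tendsto φ (𝓝[<] t) (𝓝 0) :=
    tendsto_const_nhds.congr' ((hφ.eventually_eq_zero ht).mono fun _ h => h.symm)
  rcases eq_or_ne t 0 with rfl | ht0
  · rwa [lm_zero]
  · rwa [lm_eq_of_tendsto ht0 hlim]

theorem IsExcursion.lm_nonneg (hφ : IsExcursion φ) (t : ℝ) : 0 ≤ lm φ t :=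
  ge_of_tendsto' (hφ.tendsto_nhdsLT t) hφ.apply_nonneg

theorem IsExcursion.le_lm (hφ : IsExcursion φ) {A p t : ℝ} (hpt : p < t)
    (H : ∀ x ∈ Ioo p t, A ≤ φ x) : A ≤ lm φ t :=
  ge_of_tendsto (hφ.tendsto_nhdsLT t) (eventually_of_mem (Ioo_mem_nhdsLT hpt) H)

theorem IsExcursion.infIcc_le_lm (hφ : IsExcursion φ) {p t q : ℝ} (hpt : p < t)
    (htq : t ≤ q) :
    infIcc φ p q ≤ lm φ t :=
  hφ.le_lm hpt fun _ hx => hφ.infIcc_le ⟨hx.1.le, hx.2.le.trans htq⟩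

theorem IsExcursion.zero_le_jump (hφ : IsExcursion φ) (t : ℝ) : 0 ≤ jump φ t := by
  by_cases ht : t ∈ Icc (0:ℝ) 1
  · exact hφ.jump_nonneg t ht
  have hlm : lm φ t = 0 := tendsto_nhds_unique (hφ.tendsto_nhdsLT t) <| tendsto_const_nhds.congr'
    ((hφ.eventually_eq_zero fun h => ht (Ioc_subset_Icc_self h)).mono fun _ h => h.symm)
  rw [jump, hlm, hφ.zero_outside t ht, sub_zero]

theorem IsExcursion.tendsto_lm_nhdsLT (hφ : IsExcursion φ) (t : ℝ) :
    Tendsto (lm φ) (𝓝[<] t) (𝓝 (lm φ t)) := by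
  refine Metric.nhds_basis_closedBall.tendsto_right_iff.2 fun ε hε => ?_
  obtain ⟨_, hat, ha⟩ := mem_nhdsLT_iff_exists_Ioo_subset.1
    ((hφ.tendsto_nhdsLT t) (Metric.closedBall_mem_nhds _ hε))
  filter_upwards [Ioo_mem_nhdsLT hat] with r hr
  exact Metric.isClosed_closedBall.mem_of_tendsto (hφ.tendsto_nhdsLT r)
    (eventually_of_mem (Ioo_mem_nhdsLT hr.1) fun y hy => ha ⟨hy.1, hy.2.trans hr.2⟩)

theorem IsExcursion.pre_zero (hφ : IsExcursion φ) {t : ℝ} (ht : 0 ≤ t) : pre φ 0 t :=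
  ⟨ht, by rw [lm_zero]; exact hφ.infIcc_nonneg 0 t⟩

theorem IsExcursion.pre_self (hφ : IsExcursion φ) (r : ℝ) : pre φ r r :=
  ⟨le_rfl, by rw [hφ.infIcc_self, ← sub_nonneg]; exact hφ.zero_le_jump r⟩

theorem IsExcursion.pre_of_lm_le (hφ : IsExcursion φ) {m v w : ℝ} (hmv : m ≤ v)
    (hvw : v ≤ w) (hlm : lm φ v ≤ lm φ m) (h : pre φ m w) : pre φ v w :=
  ⟨hvw, hlm.trans (h.2.trans (hφ.infIcc_mono hmv le_rfl hvw))⟩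

theorem le_mrca {r s t : ℝ} (hr : 0 ≤ r) (hs : pre φ r s) (ht : pre φ r t) :
    r ≤ mrca φ s t :=
  le_csSup ⟨s, fun _ hr => hr.2.1.1⟩ ⟨hr, hs, ht⟩

theorem IsExcursion.isLUB_mrca (hφ : IsExcursion φ) {s t : ℝ} (hs : 0 ≤ s) (ht : 0 ≤ t) :
    IsLUB {r : ℝ | 0 ≤ r ∧ pre φ r s ∧ pre φ r t} (mrca φ s t) :=
  isLUB_csSup ⟨0, le_rfl, hφ.pre_zero hs, hφ.pre_zero ht⟩ ⟨s, fun _ hr => hr.2.1.1⟩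

theorem IsExcursion.mrca_nonneg (hφ : IsExcursion φ) {s t : ℝ} (hs : 0 ≤ s) (ht : 0 ≤ t) :
    0 ≤ mrca φ s t :=
  le_mrca le_rfl (hφ.pre_zero hs) (hφ.pre_zero ht)

theorem IsExcursion.mrca_le_left (hφ : IsExcursion φ) {s t : ℝ} (hs : 0 ≤ s) (ht : 0 ≤ t) :
    mrca φ s t ≤ s :=
  (hφ.isLUB_mrca hs ht).2 fun _ hr => hr.2.1.1

theorem IsExcursion.mrca_le_right (hφ : IsExcursion φ) {s t : ℝ} (hs : 0 ≤ s) (ht : 0 ≤ t) :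
    mrca φ s t ≤ t :=
  (hφ.isLUB_mrca hs ht).2 fun _ hr => hr.2.2.1

/-- Common ancestors accumulate at `mrca φ s t` from the left, and `lm φ` is left-continuous. -/
theorem IsExcursion.pre_mrca (hφ : IsExcursion φ) {s t : ℝ} (hs : 0 ≤ s) (ht : 0 ≤ t) :
    pre φ (mrca φ s t) s ∧ pre φ (mrca φ s t) t := by
  have hfreq :=
    (hφ.isLUB_mrca hs ht).frequently_mem ⟨0, le_rfl, hφ.pre_zero hs, hφ.pre_zero ht⟩
  have hlim : Tendsto (lm φ) (𝓝[≤] mrca φ s t) (𝓝 (lm φ (mrca φ s t))) :=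
    continuousWithinAt_Iio_iff_Iic.1 (hφ.tendsto_lm_nhdsLT _)
  have key : ∀ w, mrca φ s t ≤ w →
      (∀ r, 0 ≤ r → pre φ r s → pre φ r t → pre φ r w) → pre φ (mrca φ s t) w :=
    fun w hw hanc =>
    ⟨hw, le_infIcc hw fun x hx => le_of_tendsto_of_frequently hlim <| hfreq.mono
      fun r ⟨hr, hrs, hrt⟩ => (hanc r hr hrs hrt).2.trans <| hφ.infIcc_le
        ⟨(le_mrca hr hrs hrt).trans hx.1, hx.2⟩⟩
  exact ⟨key s (hφ.mrca_le_left hs ht) fun _ _ h _ => h,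
    key t (hφ.mrca_le_right hs ht) fun _ _ _ h => h⟩

/-- Otherwise `v` would be a common ancestor larger than `mrca φ a b`. -/
theorem IsExcursion.mrca_notMem_Ioo (hφ : IsExcursion φ) {a b u v : ℝ} (ha : 0 ≤ a)
    (hb : 0 ≤ b) (ha' : a ∉ Ico u v) (hb' : b ∉ Ico u v) (hv : 0 ≤ v)
    (hlm : ∀ m ∈ Ioo u v, lm φ v ≤ lm φ m) : mrca φ a b ∉ Ioo u v := fun hm => by
  obtain ⟨hma, hmb⟩ := hφ.pre_mrca ha hb
  have hva : v ≤ a := not_lt.1 fun h => ha' ⟨hm.1.le.trans hma.1, h⟩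
  have hvb : v ≤ b := not_lt.1 fun h => hb' ⟨hm.1.le.trans hmb.1, h⟩
  exact hm.2.not_ge <| le_mrca hv (hφ.pre_of_lm_le hm.2.le hva (hlm _ hm) hma)
    (hφ.pre_of_lm_le hm.2.le hvb (hlm _ hm) hmb)

theorem xst_nonneg (φ : ℝ → ℝ) (r t : ℝ) : 0 ≤ xst φ r t := by
  unfold xst
  split_ifs
  exacts [le_max_right _ _, le_rfl]

theorem xst_of_pre {r t : ℝ} (h : pre φ r t) : xst φ r t = infIcc φ r t - lm φ r := by
  rw [xst, if_pos h.1, max_eq_left (sub_nonneg.2 h.2)]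

theorem xst_eq_zero {r t : ℝ} (h : infIcc φ r t ≤ lm φ r) : xst φ r t = 0 := by
  unfold xst
  split_ifs
  exacts [max_eq_right (sub_nonpos.2 h), rfl]

theorem IsExcursion.xst_le_jump (hφ : IsExcursion φ) (r t : ℝ) : xst φ r t ≤ jump φ r := by
  unfold xst
  split_ifs with hrt
  · exact max_le (by rw [jump]; linarith [hφ.infIcc_le ⟨le_rfl, hrt⟩]) (hφ.zero_le_jump r)
  · exact hφ.zero_le_jump r

theorem cdel_comm (φ : ℝ → ℝ) (t a b : ℝ) : cdel φ t a b = cdel φ t b a := by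
  rw [cdel, cdel, abs_sub_comm]

theorem cdel_self {t : ℝ} (h : 0 ≤ jump φ t) (a : ℝ) : cdel φ t a a = 0 := by
  simp [cdel, h]

/-! ### Sums along an ancestral line -/

/-- Written so that `cdel φ r 0 x = loopWeight (jump φ r) x` holds by definition. -/
def loopWeight (J x : ℝ) : ℝ := min |0 - x| (J - |0 - x|)

/-- `d_O` and the sum in `d_T` both sum `F (Δ_r, x_r^w)` over `m ≺ r ⪯ w`, for `F = loopWeight`
and `F = fun _ x => x`; their common treatment only needs `0 ≤ F J x ≤ x` for `0 ≤ x ≤ J`. -/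
def IsLineWeight (F : ℝ → ℝ → ℝ) : Prop :=
  ∀ J x, 0 ≤ x → x ≤ J → 0 ≤ F J x ∧ F J x ≤ x

theorem isLineWeight_loopWeight : IsLineWeight loopWeight := fun J x hx hxJ => by
  rw [loopWeight, zero_sub, abs_neg, abs_of_nonneg hx]
  exact ⟨le_min hx (sub_nonneg.2 hxJ), min_le_left _ _⟩

theorem isLineWeight_snd : IsLineWeight fun _ x => x := fun _ _ hx _ => ⟨hx, le_rfl⟩

theorem IsLineWeight.apply_zero {F : ℝ → ℝ → ℝ} (hF : IsLineWeight F) {J : ℝ}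
    (hJ : 0 ≤ J) : F J 0 = 0 :=
  le_antisymm (hF J 0 le_rfl hJ).2 (hF J 0 le_rfl hJ).1

def lineTerm (F : ℝ → ℝ → ℝ) (φ : ℝ → ℝ) (m w r : ℝ) : ℝ :=
  if pre φ m r ∧ m < r ∧ pre φ r w then F (jump φ r) (xst φ r w) else 0

theorem dO_eq_tsum (m w : ℝ) : dO φ m w = ∑' r, lineTerm loopWeight φ m w r := rfl

theorem dTanc_eq_sub_tsum (m w : ℝ) :
    dTanc φ m w = φ w - infIcc φ m w - ∑' r, lineTerm (fun _ x => x) φ m w r := rfl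

theorem lineTerm_congr {F : ℝ → ℝ → ℝ} {φ ψ : ℝ → ℝ} {m w r m' w' r' : ℝ}
    (hline : pre φ m r ∧ m < r ∧ pre φ r w ↔ pre ψ m' r' ∧ m' < r' ∧ pre ψ r' w')
    (hval : pre φ m r ∧ m < r ∧ pre φ r w →
      jump φ r = jump ψ r' ∧ xst φ r w = xst ψ r' w') :
    lineTerm F φ m w r = lineTerm F ψ m' w' r' := by
  unfold lineTerm
  by_cases h : pre φ m r ∧ m < r ∧ pre φ r w
  · rw [if_pos h, if_pos (hline.1 h), (hval h).1, (hval h).2]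
  · rw [if_neg h, if_neg (mt hline.2 h)]

theorem lineTerm_of_not_lt (F : ℝ → ℝ → ℝ) (φ : ℝ → ℝ) {m w r : ℝ}
    (h : ¬m < r) : lineTerm F φ m w r = 0 :=
  if_neg fun h' => h h'.2.1

theorem IsLineWeight.lineTerm_eq_zero {F : ℝ → ℝ → ℝ} (hF : IsLineWeight F)
    (hφ : IsExcursion φ) {m w r : ℝ}
    (h : pre φ m r ∧ m < r ∧ pre φ r w → xst φ r w = 0) : lineTerm F φ m w r = 0 := by
  unfold lineTerm
  split_ifs with hc
  · rw [h hc, hF.apply_zero (hφ.zero_le_jump r)]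
  · rfl

theorem lineTerm_self (F : ℝ → ℝ → ℝ) (φ : ℝ → ℝ) (m r : ℝ) :
    lineTerm F φ m m r = 0 :=
  if_neg fun h => h.2.1.not_ge h.2.2.1

theorem dO_self (m : ℝ) : dO φ m m = 0 := by
  simp only [dO_eq_tsum, lineTerm_self, tsum_zero]

theorem IsExcursion.dTanc_self (hφ : IsExcursion φ) (m : ℝ) : dTanc φ m m = 0 := by
  simp only [dTanc_eq_sub_tsum, lineTerm_self, tsum_zero, hφ.infIcc_self, sub_self]

theorem IsExcursion.lineTerm_mem_Icc {F : ℝ → ℝ → ℝ} (hF : IsLineWeight F)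
    (hφ : IsExcursion φ) (m w r : ℝ) :
    lineTerm F φ m w r ∈ Icc 0 (lineTerm (fun _ x => x) φ m w r) := by
  unfold lineTerm
  split_ifs
  exacts [hF _ _ (xst_nonneg φ r w) (hφ.xst_le_jump r w), ⟨le_rfl, le_rfl⟩]

/-- Telescoping along the ancestral line `r₁ < ⋯ < rₖ ≤ w`: `x_{rᵢ}^w = inf_{[rᵢ,w]} φ - φ(rᵢ−)`
and `inf_{[rᵢ,w]} φ ≤ φ(rᵢ₊₁−)`. -/
theorem IsExcursion.sum_lineTerm_le (hφ : IsExcursion φ) (m w : ℝ) (T : Finset ℝ) :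
    ∑ r ∈ T, lineTerm (fun _ x => x) φ m w r ≤ φ w := by
  classical
  set X := lineTerm (fun _ x => x) φ m w
  suffices H : ∀ β ≤ w, (∀ r ∈ T, X r ≠ 0 → r ≤ β) →
      ∑ r ∈ T, X r ≤ infIcc φ β w by
    simpa [hφ.infIcc_self] using
      H w le_rfl fun r _ hr => by by_contra h; exact hr (if_neg fun hc => h hc.2.2.1)
  induction T using Finset.induction_on_max with
  | empty => exact fun β _ _ => by simpa using hφ.infIcc_nonneg β w
  | insert a s has ih =>
    intro β hβ hact
    rw [Finset.sum_insert fun h => (has a h).false]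
    by_cases hXa : X a = 0
    · rw [hXa, zero_add]
      exact ih β hβ fun r hr => hact r (Finset.mem_insert_of_mem hr)
    obtain ⟨hma, hma', haw⟩ : pre φ m a ∧ m < a ∧ pre φ a w := by
      by_contra h; exact hXa (if_neg h)
    set β' := (insert m s).max' (Finset.insert_nonempty m s)
    have hβ'a : β' < a := (Finset.max'_lt_iff _ _).2 fun r hr => by
      rcases Finset.mem_insert.1 hr with rfl | hr
      exacts [hma', has r hr]
    have hs : ∑ r ∈ s, X r ≤ lm φ a :=
      (ih β' (hβ'a.le.trans haw.1) fun r hr _ => (insert m s).le_max' r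
        (Finset.mem_insert_of_mem hr)).trans (hφ.infIcc_le_lm hβ'a haw.1)
    have hXa' : X a = infIcc φ a w - lm φ a := by
      simp only [X, lineTerm]
      rw [if_pos ⟨hma, hma', haw⟩, xst_of_pre haw]
    have hmono := hφ.infIcc_mono (hact a (Finset.mem_insert_self a s) hXa) le_rfl hβ
    linarith

theorem IsExcursion.summable_lineTerm {F : ℝ → ℝ → ℝ} (hF : IsLineWeight F)
    (hφ : IsExcursion φ) (m w : ℝ) : Summable (lineTerm F φ m w) :=
  summable_of_sum_le (fun r => (hφ.lineTerm_mem_Icc hF m w r).1) fun T =>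
    (Finset.sum_le_sum fun r _ => (hφ.lineTerm_mem_Icc hF m w r).2).trans
      (hφ.sum_lineTerm_le m w T)

theorem eventually_mem_Ico_iff_nhdsGT {u v : ℝ} (t : ℝ) :
    ∀ᶠ x in 𝓝[>] t, (x ∈ Ico u v ↔ t ∈ Ico u v) := by
  rcases lt_or_ge t u with htu | hut
  · filter_upwards [Ioo_mem_nhdsGT htu] with x hx
    exact iff_of_false (fun h => hx.2.not_ge h.1) fun h => htu.not_ge h.1
  rcases lt_or_ge t v with htv | hvt
  · filter_upwards [Ioo_mem_nhdsGT htv] with x hx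
    exact iff_of_true ⟨hut.trans hx.1.le, hx.2⟩ ⟨hut, htv⟩
  · filter_upwards [self_mem_nhdsWithin] with x hx
    exact iff_of_false (fun h => h.2.not_ge (hvt.trans (le_of_lt hx))) fun h => h.2.not_ge hvt

theorem eventually_mem_Ico_iff_nhdsLT {u v : ℝ} (t : ℝ) :
    ∀ᶠ x in 𝓝[<] t, (x ∈ Ico u v ↔ t ∈ Ioc u v) := by
  rcases le_or_gt t u with htu | hut
  · filter_upwards [self_mem_nhdsWithin] with x hx
    exact iff_of_false (fun h => (lt_of_lt_of_le hx htu).not_ge h.1) fun h => htu.not_gt h.1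
  rcases le_or_gt t v with htv | hvt
  · filter_upwards [Ioo_mem_nhdsLT hut] with x hx
    exact iff_of_true ⟨hx.1.le, hx.2.trans_le htv⟩ ⟨hut, htv⟩
  · filter_upwards [Ioo_mem_nhdsLT hvt] with x hx
    exact iff_of_false (fun h => h.2.not_gt hx.1) fun h => h.2.not_gt hvt

/-- `f` restricted to `[u,v]` is an excursion above the level `f(u−)`. -/
structure IsSubExcursion (f : ℝ → ℝ) (u v : ℝ) : Prop where
  exc : IsExcursion f
  nonneg : 0 ≤ u
  le_one : v ≤ 1
  pre_uv : pre f u v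
  lt : u < v
  lm_eq : lm f u = lm f v

def prune (f : ℝ → ℝ) (u v t : ℝ) : ℝ := if t ∈ Ico u v then lm f u else f t

def subExcursion (f : ℝ → ℝ) (u v t : ℝ) : ℝ :=
  if t ∈ Ico (0:ℝ) 1 then f (u + t * (v - u)) - lm f u else 0

theorem prune_of_mem {f : ℝ → ℝ} {u v t : ℝ} (ht : t ∈ Ico u v) :
    prune f u v t = lm f u :=
  if_pos ht

theorem prune_of_notMem {f : ℝ → ℝ} {u v t : ℝ} (ht : t ∉ Ico u v) :
    prune f u v t = f t :=
  if_neg ht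

theorem subExcursion_of_notMem {f : ℝ → ℝ} {u v t : ℝ} (ht : t ∉ Ico (0:ℝ) 1) :
    subExcursion f u v t = 0 :=
  if_neg ht

namespace IsSubExcursion

variable {f : ℝ → ℝ} {u v : ℝ} (B : IsSubExcursion f u v)
include B

theorem lm_le_of_mem_Icc {x : ℝ} (hx : x ∈ Icc u v) : lm f u ≤ f x :=
  B.pre_uv.2.trans (B.exc.infIcc_le hx)

theorem infIcc_le_lm_of_lt {p q : ℝ} (hp : p < v) (hq : v ≤ q) : infIcc f p q ≤ lm f u :=
  B.lm_eq ▸ B.exc.infIcc_le_lm hp hq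

theorem lm_le_lm {t : ℝ} (ht : t ∈ Icc u v) : lm f u ≤ lm f t := by
  rcases ht.1.eq_or_lt with rfl | hut
  · exact le_rfl
  · exact B.exc.le_lm hut fun x hx => B.lm_le_of_mem_Icc ⟨hx.1.le, hx.2.le.trans ht.2⟩

theorem pre_of_mem_Icc {r a : ℝ} (hr : r ∈ Icc u v) (h : pre f r a) : pre f u a := by
  refine ⟨hr.1.trans h.1, ?_⟩
  rw [B.exc.infIcc_eq_min hr.1 h.1]
  exact le_min (le_infIcc hr.1 fun x hx => B.lm_le_of_mem_Icc ⟨hx.1, hx.2.trans hr.2⟩)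
    ((B.lm_le_lm hr).trans h.2)

theorem pre_iff_of_lm_eq {ρ r : ℝ} (hρ : ρ ∈ Icc u v) (hlm : lm f ρ = lm f u)
    (hρr : ρ ≤ r) : pre f ρ r ↔ pre f u r :=
  ⟨B.pre_of_mem_Icc hρ, B.exc.pre_of_lm_le hρ.1 hρr hlm.le⟩

theorem infIcc_eq_infIcc_left {r w : ℝ} (hr : r < u) (hw : w ∈ Icc u v) :
    infIcc f r w = infIcc f r u := by
  refine le_antisymm (B.exc.infIcc_mono le_rfl hw.1 hr.le)
    (le_infIcc (hr.le.trans hw.1) fun x hx => ?_)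
  rcases le_or_gt x u with hxu | hux
  · exact B.exc.infIcc_le ⟨hx.1, hxu⟩
  · exact (B.exc.infIcc_le_lm hr le_rfl).trans (B.lm_le_of_mem_Icc ⟨hux.le, hx.2.trans hw.2⟩)

theorem infIcc_eq_lm_of_pre {r a : ℝ} (hr : r ∈ Ico u v) (hva : v ≤ a) (h : pre f r a) :
    infIcc f r a = lm f u :=
  le_antisymm (B.infIcc_le_lm_of_lt hr.2 hva) ((B.lm_le_lm (Ico_subset_Icc_self hr)).trans h.2)

theorem xst_eq_zero_of_lm_eq {r ρ w : ℝ} (hur : u ≤ r) (hrρ : r < ρ) (hρw : ρ ≤ w)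
    (hρv : ρ ≤ v) (hlmρ : lm f ρ = lm f u) : xst f r w = 0 :=
  xst_eq_zero <| (B.exc.infIcc_le_lm hrρ hρw).trans <|
    hlmρ.le.trans (B.lm_le_lm ⟨hur, hrρ.le.trans hρv⟩)

theorem xst_eq_zero_of_mem_Ico {r w : ℝ} (hr : r ∈ Ico u v) (hw : v ≤ w) : xst f r w = 0 :=
  B.xst_eq_zero_of_lm_eq hr.1 hr.2 hw le_rfl B.lm_eq.symm

/-! ### The pruned excursion `g` -/

theorem tendsto_prune_nhdsLT (t : ℝ) :
    Tendsto (prune f u v) (𝓝[<] t) (𝓝 (if t ∈ Ioc u v then lm f u else lm f t)) := by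
  split_ifs with ht
  · exact tendsto_const_nhds.congr' <| (eventually_mem_Ico_iff_nhdsLT t).mono
      fun x hx => (prune_of_mem (hx.2 ht)).symm
  · exact (B.exc.tendsto_nhdsLT t).congr' <| (eventually_mem_Ico_iff_nhdsLT t).mono
      fun x hx => (prune_of_notMem (mt hx.1 ht)).symm

theorem lm_prune (t : ℝ) : lm (prune f u v) t = if t ∈ Ioc u v then lm f u else lm f t := by
  rcases eq_or_ne t 0 with rfl | ht0
  · rw [if_neg fun h => (B.nonneg.trans_lt h.1).false, lm_zero, lm_zero]
  · exact lm_eq_of_tendsto ht0 (B.tendsto_prune_nhdsLT t)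

theorem lm_prune_of_notMem_Ioo {t : ℝ} (ht : t ∉ Ioo u v) : lm (prune f u v) t = lm f t := by
  rw [B.lm_prune]
  split_ifs with h
  · rw [le_antisymm h.2 (not_lt.1 fun hv => ht ⟨h.1, hv⟩), B.lm_eq]
  · rfl

theorem lm_prune_of_mem_Icc {t : ℝ} (ht : t ∈ Icc u v) : lm (prune f u v) t = lm f u := by
  rw [B.lm_prune]
  split_ifs with h
  · rfl
  · rw [le_antisymm (not_lt.1 fun hu => h ⟨hu, ht.2⟩) ht.1]

theorem jump_prune_of_notMem {t : ℝ} (ht : t ∉ Ico u v) : jump (prune f u v) t = jump f t := by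
  rw [jump, jump, prune_of_notMem ht, B.lm_prune_of_notMem_Ioo fun h => ht (Ioo_subset_Ico_self h)]

theorem jump_prune_of_mem {t : ℝ} (ht : t ∈ Ico u v) : jump (prune f u v) t = 0 := by
  rw [jump, prune_of_mem ht, B.lm_prune_of_mem_Icc (Ico_subset_Icc_self ht), sub_self]

theorem isExcursion_prune : IsExcursion (prune f u v) where
  nonneg t ht := by
    unfold prune
    split_ifs
    exacts [B.exc.lm_nonneg u, B.exc.nonneg t ht]
  zero_outside t ht := by
    rw [prune_of_notMem fun h => ht ⟨B.nonneg.trans h.1, h.2.le.trans B.le_one⟩,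
      B.exc.zero_outside t ht]
  rightCont t ht := by
    by_cases htI : t ∈ Ico u v
    · rw [prune_of_mem htI]
      exact tendsto_const_nhds.congr' <| (eventually_mem_Ico_iff_nhdsGT t).mono
        fun x hx => (prune_of_mem (hx.2 htI)).symm
    · rw [prune_of_notMem htI]
      exact (B.exc.rightCont t ht).congr' <| (eventually_mem_Ico_iff_nhdsGT t).mono
        fun x hx => (prune_of_notMem (mt hx.1 htI)).symm
  leftLimEx t ht := by
    have h := B.tendsto_prune_nhdsLT t
    rwa [leftLim_eq_of_tendsto h]
  one := by rw [prune_of_notMem fun h => h.2.not_ge B.le_one, B.exc.one]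
  jump_nonneg t ht := by
    by_cases htI : t ∈ Ico u v
    · rw [B.jump_prune_of_mem htI]
    · rw [B.jump_prune_of_notMem htI]
      exact B.exc.jump_nonneg t ht

theorem infIcc_prune {p q : ℝ} (hpq : p ≤ q) (h : p < u ∨ q ∉ Ico u v) :
    infIcc (prune f u v) p q = infIcc f p q := by
  apply le_antisymm
  · refine le_infIcc hpq fun x hx => ?_
    by_cases hxI : x ∈ Ico u v
    · calc infIcc (prune f u v) p q ≤ prune f u v x := B.isExcursion_prune.infIcc_le hx
        _ = lm f u := prune_of_mem hxI
        _ ≤ f x := B.lm_le_of_mem_Icc (Ico_subset_Icc_self hxI)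
    · rw [← prune_of_notMem (f := f) hxI]
      exact B.isExcursion_prune.infIcc_le hx
  · refine le_infIcc hpq fun x hx => ?_
    unfold prune
    split_ifs with hxI
    · rcases h with hpu | hq
      · exact B.exc.infIcc_le_lm hpu (hxI.1.trans hx.2)
      · exact B.infIcc_le_lm_of_lt (hx.1.trans_lt hxI.2)
          (not_lt.1 fun hqv => hq ⟨hxI.1.trans hx.2, hqv⟩)
    · exact B.exc.infIcc_le hx

theorem pre_prune_iff {r w : ℝ} (hr : r ∉ Ioo u v) (h : r < u ∨ w ∉ Ico u v) :
    pre (prune f u v) r w ↔ pre f r w := by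
  unfold pre
  by_cases hrw : r ≤ w
  · rw [B.lm_prune_of_notMem_Ioo hr, B.infIcc_prune hrw h]
  · simp [hrw]

theorem pre_prune_iff_of_lt {r w : ℝ} (hr : r < u) (hw : w ∈ Icc u v) :
    pre (prune f u v) r u ↔ pre f r w := by
  unfold pre
  rw [B.lm_prune_of_notMem_Ioo fun h => h.1.not_gt hr, B.infIcc_prune hr.le (Or.inl hr),
    ← B.infIcc_eq_infIcc_left hr hw]
  exact and_congr_left fun _ => iff_of_true hr.le (hr.le.trans hw.1)

theorem xst_prune {r w : ℝ} (hr : r ∉ Ioo u v) (h : r < u ∨ w ∉ Ico u v) :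
    xst (prune f u v) r w = xst f r w := by
  unfold xst
  split_ifs with hrw
  · rw [B.lm_prune_of_notMem_Ioo hr, B.infIcc_prune hrw h]
  · rfl

theorem xst_prune_of_lt {r w : ℝ} (hr : r < u) (hw : w ∈ Icc u v) :
    xst (prune f u v) r u = xst f r w := by
  rw [xst, xst, if_pos hr.le, if_pos (hr.le.trans hw.1),
    B.lm_prune_of_notMem_Ioo fun h => h.1.not_gt hr, B.infIcc_prune hr.le (Or.inl hr),
    B.infIcc_eq_infIcc_left hr hw]

theorem xst_prune_eq_zero {r : ℝ} (hr : r ∈ Ico u v) (w : ℝ) : xst (prune f u v) r w = 0 := by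
  by_cases hrw : r ≤ w
  · refine xst_eq_zero ?_
    rw [B.lm_prune_of_mem_Icc (Ico_subset_Icc_self hr), ← prune_of_mem hr]
    exact B.isExcursion_prune.infIcc_le ⟨le_rfl, hrw⟩
  · rw [xst, if_neg hrw]

theorem mrca_notMem_Ioo {a b : ℝ} (ha : 0 ≤ a) (hb : 0 ≤ b) (ha' : a ∉ Ico u v)
    (hb' : b ∉ Ico u v) : mrca f a b ∉ Ioo u v :=
  B.exc.mrca_notMem_Ioo ha hb ha' hb' (B.nonneg.trans B.lt.le) fun _ hm =>
    B.lm_eq ▸ B.lm_le_lm ⟨hm.1.le, hm.2.le⟩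

theorem mrca_prune {a b : ℝ} (ha : 0 ≤ a) (hb : 0 ≤ b) (ha' : a ∉ Ico u v)
    (hb' : b ∉ Ico u v) : mrca (prune f u v) a b = mrca f a b := by
  have hf := B.mrca_notMem_Ioo ha hb ha' hb'
  have hg := B.isExcursion_prune.mrca_notMem_Ioo ha hb ha' hb' (B.nonneg.trans B.lt.le)
    fun _ hm => by
      rw [B.lm_prune_of_mem_Icc ⟨hm.1.le, hm.2.le⟩, B.lm_prune_of_mem_Icc ⟨B.lt.le, le_rfl⟩]
  have hab : ∀ m ∉ Ioo u v,
      pre (prune f u v) m a ∧ pre (prune f u v) m b ↔ pre f m a ∧ pre f m b :=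
    fun m hm => and_congr (B.pre_prune_iff hm (Or.inr ha')) (B.pre_prune_iff hm (Or.inr hb'))
  obtain ⟨hga, hgb⟩ := (hab _ hg).1 (B.isExcursion_prune.pre_mrca ha hb)
  obtain ⟨hfa, hfb⟩ := (hab _ hf).2 (B.exc.pre_mrca ha hb)
  exact le_antisymm (le_mrca (B.isExcursion_prune.mrca_nonneg ha hb) hga hgb)
    (le_mrca (B.exc.mrca_nonneg ha hb) hfa hfb)

theorem lineTerm_prune {F : ℝ → ℝ → ℝ} (hF : IsLineWeight F) {m w : ℝ}
    (hm : m ∉ Ioo u v) (hw : w ∉ Ico u v) (r : ℝ) :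
    lineTerm F (prune f u v) m w r = lineTerm F f m w r := by
  by_cases hr : r ∈ Ico u v
  · rw [hF.lineTerm_eq_zero B.isExcursion_prune fun _ => B.xst_prune_eq_zero hr w,
      hF.lineTerm_eq_zero B.exc fun hc => B.xst_eq_zero_of_mem_Ico hr <|
        not_lt.1 fun hwv => hw ⟨hr.1.trans hc.2.2.1, hwv⟩]
  · have hr' : r ∉ Ioo u v := fun h => hr (Ioo_subset_Ico_self h)
    exact lineTerm_congr (by rw [B.pre_prune_iff hm (Or.inr hr), B.pre_prune_iff hr' (Or.inr hw)])
      fun _ => ⟨B.jump_prune_of_notMem hr, B.xst_prune hr' (Or.inr hw)⟩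

theorem dO_prune {m w : ℝ} (hm : m ∉ Ioo u v) (hw : w ∉ Ico u v) :
    dO (prune f u v) m w = dO f m w := by
  simp only [dO_eq_tsum, B.lineTerm_prune isLineWeight_loopWeight hm hw]

theorem dTanc_prune {m w : ℝ} (hm : m ∉ Ioo u v) (hmw : m ≤ w) (hw : w ∉ Ico u v) :
    dTanc (prune f u v) m w = dTanc f m w := by
  simp only [dTanc_eq_sub_tsum, B.lineTerm_prune isLineWeight_snd hm hw, prune_of_notMem hw,
    B.infIcc_prune hmw (Or.inr hw)]

theorem cdel_prune {m a b : ℝ} (hm : m ∉ Ioo u v) (hma : m ≤ a) (hmb : m ≤ b)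
    (ha : a ∉ Ico u v) (hb : b ∉ Ico u v) :
    cdel (prune f u v) m (xst (prune f u v) m a) (xst (prune f u v) m b) =
      cdel f m (xst f m a) (xst f m b) := by
  by_cases hmu : m = u
  · subst hmu
    have hmI : m ∈ Ico m v := ⟨le_rfl, B.lt⟩
    have hva : v ≤ a := not_lt.1 fun h => ha ⟨hma, h⟩
    have hvb : v ≤ b := not_lt.1 fun h => hb ⟨hmb, h⟩
    rw [B.xst_prune_eq_zero hmI, B.xst_prune_eq_zero hmI, B.xst_eq_zero_of_mem_Ico hmI hva,
      B.xst_eq_zero_of_mem_Ico hmI hvb, cdel_self (B.exc.zero_le_jump m),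
      cdel_self (B.isExcursion_prune.zero_le_jump m)]
  · have hm' : m ∉ Ico u v := fun h => hm ⟨lt_of_le_of_ne h.1 (Ne.symm hmu), h.2⟩
    rw [B.xst_prune hm (Or.inr ha), B.xst_prune hm (Or.inr hb), cdel, cdel,
      B.jump_prune_of_notMem hm']

theorem dL_prune {a b : ℝ} (ha : 0 ≤ a) (hb : 0 ≤ b) (ha' : a ∉ Ico u v)
    (hb' : b ∉ Ico u v) : dL f a b = dL (prune f u v) a b := by
  have hm := B.mrca_notMem_Ioo ha hb ha' hb'
  obtain ⟨hma, hmb⟩ := B.exc.pre_mrca ha hb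
  rw [dL, dL, B.mrca_prune ha hb ha' hb', B.cdel_prune hm hma.1 hmb.1 ha' hb',
    B.dO_prune hm ha', B.dO_prune hm hb']

theorem dT_prune {a b : ℝ} (ha : 0 ≤ a) (hb : 0 ≤ b) (ha' : a ∉ Ico u v)
    (hb' : b ∉ Ico u v) : dT f a b = dT (prune f u v) a b := by
  have hm := B.mrca_notMem_Ioo ha hb ha' hb'
  obtain ⟨hma, hmb⟩ := B.exc.pre_mrca ha hb
  rw [dT, dT, B.mrca_prune ha hb ha' hb', B.dTanc_prune hm hma.1 ha',
    B.dTanc_prune hm hmb.1 hb']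

/-! ### The sub-excursion `h` -/

def embed : ℝ ≃o ℝ :=
  (OrderIso.mulRight₀ (v - u) (sub_pos.2 B.lt)).trans (OrderIso.addLeft u)

theorem embed_apply (t : ℝ) : B.embed t = u + t * (v - u) := rfl

theorem embed_zero : B.embed 0 = u := by simp [embed_apply]

theorem embed_one : B.embed 1 = v := by simp [embed_apply]

theorem embed_nonneg {t : ℝ} (ht : 0 ≤ t) : 0 ≤ B.embed t :=
  B.nonneg.trans (B.embed_zero.symm.trans_le (B.embed.monotone ht))

theorem embed_mem_Icc {t : ℝ} (ht : t ∈ Icc (0:ℝ) 1) : B.embed t ∈ Icc u v :=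
  ⟨B.embed_zero.symm.trans_le (B.embed.monotone ht.1),
    (B.embed.monotone ht.2).trans_eq B.embed_one⟩

theorem embed_mem_Ico {t : ℝ} (ht : t ∈ Ico (0:ℝ) 1) : B.embed t ∈ Ico u v :=
  ⟨B.embed_zero.symm.trans_le (B.embed.monotone ht.1),
    (B.embed.strictMono ht.2).trans_eq B.embed_one⟩

theorem exists_embed_eq {r : ℝ} (hr : u ≤ r) : ∃ z, 0 ≤ z ∧ B.embed z = r :=
  ⟨B.embed.symm r, B.embed.le_symm_apply.2 (B.embed_zero.trans_le hr),
    B.embed.apply_symm_apply r⟩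

theorem pre_embed {s : ℝ} (hs : s ∈ Icc (0:ℝ) 1) : pre f u (B.embed s) :=
  ⟨(B.embed_mem_Icc hs).1, le_infIcc (B.embed_mem_Icc hs).1 fun _ hx =>
    B.lm_le_of_mem_Icc ⟨hx.1, hx.2.trans (B.embed_mem_Icc hs).2⟩⟩

theorem subExcursion_of_mem {t : ℝ} (ht : t ∈ Ico (0:ℝ) 1) :
    subExcursion f u v t = f (B.embed t) - lm f u :=
  if_pos ht

theorem tendsto_subExcursion_nhdsLT {t : ℝ} (ht : t ∈ Ioc (0:ℝ) 1) :
    Tendsto (subExcursion f u v) (𝓝[<] t) (𝓝 (lm f (B.embed t) - lm f u)) := by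
  have he : Tendsto B.embed (𝓝[<] t) (𝓝[<] (B.embed t)) :=
    B.embed.continuous.continuousWithinAt.tendsto_nhdsWithin fun _ hx => B.embed.strictMono hx
  refine (((B.exc.tendsto_nhdsLT _).comp he).sub_const _).congr' ?_
  filter_upwards [Ioo_mem_nhdsLT ht.1] with x hx
  exact (B.subExcursion_of_mem ⟨hx.1.le, hx.2.trans_le ht.2⟩).symm

theorem lm_subExcursion {t : ℝ} (ht : t ∈ Icc (0:ℝ) 1) :
    lm (subExcursion f u v) t = lm f (B.embed t) - lm f u := by
  rcases ht.1.eq_or_lt with rfl | ht0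
  · rw [lm_zero, B.embed_zero, sub_self]
  · exact lm_eq_of_tendsto ht0.ne' (B.tendsto_subExcursion_nhdsLT ⟨ht0, ht.2⟩)

theorem jump_subExcursion {t : ℝ} (ht : t ∈ Ico (0:ℝ) 1) :
    jump (subExcursion f u v) t = jump f (B.embed t) := by
  rw [jump, jump, B.subExcursion_of_mem ht, B.lm_subExcursion (Ico_subset_Icc_self ht)]
  ring

theorem isExcursion_subExcursion : IsExcursion (subExcursion f u v) where
  nonneg t _ := by
    by_cases ht : t ∈ Ico (0:ℝ) 1
    · rw [B.subExcursion_of_mem ht, sub_nonneg]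
      exact B.lm_le_of_mem_Icc (B.embed_mem_Icc (Ico_subset_Icc_self ht))
    · rw [subExcursion_of_notMem ht]
  zero_outside _ ht := subExcursion_of_notMem fun h => ht (Ico_subset_Icc_self h)
  rightCont t ht := by
    have he : Tendsto B.embed (𝓝[>] t) (𝓝[>] (B.embed t)) :=
      B.embed.continuous.continuousWithinAt.tendsto_nhdsWithin fun _ hx => B.embed.strictMono hx
    have hmem := B.embed_mem_Ico ht
    rw [B.subExcursion_of_mem ht]
    refine (((B.exc.rightCont _ ⟨B.nonneg.trans hmem.1, hmem.2.trans_le B.le_one⟩).comp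
      he).sub_const _).congr' ?_
    filter_upwards [Ioo_mem_nhdsGT ht.2] with x hx
    exact (B.subExcursion_of_mem ⟨ht.1.trans hx.1.le, hx.2⟩).symm
  leftLimEx t ht := by
    have h := B.tendsto_subExcursion_nhdsLT ht
    rwa [leftLim_eq_of_tendsto h]
  one := subExcursion_of_notMem fun h => h.2.false
  jump_nonneg t ht := by
    rcases ht.2.lt_or_eq with ht1 | rfl
    · rw [B.jump_subExcursion ⟨ht.1, ht1⟩]
      exact B.exc.zero_le_jump _
    · rw [jump, subExcursion_of_notMem fun h => h.2.false, B.lm_subExcursion ht, B.embed_one,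
        ← B.lm_eq, sub_self, sub_zero]

theorem infIcc_subExcursion {x y : ℝ} (hx : 0 ≤ x) (hxy : x ≤ y) (hy : y < 1) :
    infIcc (subExcursion f u v) x y = infIcc f (B.embed x) (B.embed y) - lm f u := by
  have hmem : ∀ z ∈ Icc x y, z ∈ Ico (0:ℝ) 1 := fun z hz =>
    ⟨hx.trans hz.1, hz.2.trans_lt hy⟩
  apply le_antisymm
  · rw [le_sub_iff_add_le]
    refine le_infIcc (B.embed.monotone hxy) fun w hw => ?_
    obtain ⟨z, hz, rfl⟩ : w ∈ B.embed '' Icc x y := by rwa [B.embed.image_Icc]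
    have := B.isExcursion_subExcursion.infIcc_le hz
    rw [B.subExcursion_of_mem (hmem z hz)] at this
    linarith
  · refine le_infIcc hxy fun z hz => ?_
    rw [B.subExcursion_of_mem (hmem z hz), sub_le_sub_iff_right]
    exact B.exc.infIcc_le (B.embed.image_Icc x y ▸ mem_image_of_mem _ hz)

theorem pre_subExcursion_iff {x y : ℝ} (hx : 0 ≤ x) (hy : y < 1) :
    pre (subExcursion f u v) x y ↔ pre f (B.embed x) (B.embed y) := by
  unfold pre
  rw [B.embed.le_iff_le]
  refine and_congr_right fun hxy => ?_
  rw [B.lm_subExcursion ⟨hx, (hxy.trans_lt hy).le⟩, B.infIcc_subExcursion hx hxy hy,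
    sub_le_sub_iff_right]

theorem xst_subExcursion {x y : ℝ} (hx : 0 ≤ x) (hy : y < 1) :
    xst (subExcursion f u v) x y = xst f (B.embed x) (B.embed y) := by
  unfold xst
  by_cases hxy : x ≤ y
  · rw [if_pos hxy, if_pos (B.embed.monotone hxy),
      B.lm_subExcursion ⟨hx, (hxy.trans_lt hy).le⟩, B.infIcc_subExcursion hx hxy hy,
      sub_sub_sub_cancel_right]
  · rw [if_neg hxy, if_neg (mt B.embed.le_iff_le.1 hxy)]

theorem mrca_embed {s t : ℝ} (hs : s ∈ Ico (0:ℝ) 1) (ht : t ∈ Ico (0:ℝ) 1) :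
    mrca f (B.embed s) (B.embed t) = B.embed (mrca (subExcursion f u v) s t) := by
  have hh := B.isExcursion_subExcursion
  obtain ⟨hms, hmt⟩ := hh.pre_mrca hs.1 ht.1
  have hm0 := hh.mrca_nonneg hs.1 ht.1
  obtain ⟨hfs, hft⟩ := B.exc.pre_mrca (B.embed_nonneg hs.1) (B.embed_nonneg ht.1)
  have hu : u ≤ mrca f (B.embed s) (B.embed t) := le_mrca B.nonneg
    (B.pre_embed (Ico_subset_Icc_self hs)) (B.pre_embed (Ico_subset_Icc_self ht))
  refine le_antisymm ?_ (le_mrca (B.embed_nonneg hm0) ((B.pre_subExcursion_iff hm0 hs.2).1 hms)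
    ((B.pre_subExcursion_iff hm0 ht.2).1 hmt))
  obtain ⟨z, hz0, hz⟩ := B.exists_embed_eq hu
  rw [← hz] at hfs hft ⊢
  exact B.embed.monotone (le_mrca hz0 ((B.pre_subExcursion_iff hz0 hs.2).2 hfs)
    ((B.pre_subExcursion_iff hz0 ht.2).2 hft))

theorem lineTerm_embed (F : ℝ → ℝ → ℝ) {σ τ : ℝ} (hσ : 0 ≤ σ) (hτ : τ < 1) (r : ℝ) :
    lineTerm F f (B.embed σ) (B.embed τ) (B.embed r) =
      lineTerm F (subExcursion f u v) σ τ r := by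
  have hline : pre f (B.embed σ) (B.embed r) ∧ B.embed σ < B.embed r ∧
      pre f (B.embed r) (B.embed τ) ↔
      pre (subExcursion f u v) σ r ∧ σ < r ∧ pre (subExcursion f u v) r τ := by
    by_cases hr : σ < r ∧ r ≤ τ
    · rw [B.pre_subExcursion_iff hσ (hr.2.trans_lt hτ),
        B.pre_subExcursion_iff (hσ.trans hr.1.le) hτ, B.embed.lt_iff_lt]
    · exact iff_of_false (fun h => hr ⟨B.embed.lt_iff_lt.1 h.2.1, B.embed.le_iff_le.1 h.2.2.1⟩)
        fun h => hr ⟨h.2.1, h.2.2.1⟩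
  refine lineTerm_congr hline fun hc => ?_
  obtain ⟨-, hσr, hrτ⟩ := hline.1 hc
  exact ⟨(B.jump_subExcursion ⟨hσ.trans hσr.le, hrτ.1.trans_lt hτ⟩).symm,
    (B.xst_subExcursion (hσ.trans hσr.le) hτ).symm⟩

theorem tsum_lineTerm_embed (F : ℝ → ℝ → ℝ) {σ τ : ℝ} (hσ : 0 ≤ σ) (hτ : τ < 1) :
    ∑' r, lineTerm F f (B.embed σ) (B.embed τ) r =
      ∑' r, lineTerm F (subExcursion f u v) σ τ r := by
  rw [← B.embed.toEquiv.tsum_eq]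
  exact tsum_congr (B.lineTerm_embed F hσ hτ)

theorem dO_embed {σ τ : ℝ} (hσ : 0 ≤ σ) (hτ : τ < 1) :
    dO f (B.embed σ) (B.embed τ) = dO (subExcursion f u v) σ τ :=
  B.tsum_lineTerm_embed loopWeight hσ hτ

theorem dTanc_embed {σ τ : ℝ} (hσ : 0 ≤ σ) (hστ : σ ≤ τ) (hτ : τ < 1) :
    dTanc f (B.embed σ) (B.embed τ) = dTanc (subExcursion f u v) σ τ := by
  rw [dTanc_eq_sub_tsum, dTanc_eq_sub_tsum, B.tsum_lineTerm_embed _ hσ hτ,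
    B.subExcursion_of_mem ⟨hσ.trans hστ, hτ⟩, B.infIcc_subExcursion hσ hστ hτ]
  ring

theorem dL_embed {s t : ℝ} (hs : s ∈ Ico (0:ℝ) 1) (ht : t ∈ Ico (0:ℝ) 1) :
    dL f (B.embed s) (B.embed t) = dL (subExcursion f u v) s t := by
  have hh := B.isExcursion_subExcursion
  have hm0 := hh.mrca_nonneg hs.1 ht.1
  have hm1 := (hh.mrca_le_left hs.1 ht.1).trans_lt hs.2
  rw [dL, dL, B.mrca_embed hs ht, B.dO_embed hm0 hs.2, B.dO_embed hm0 ht.2,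
    B.xst_subExcursion hm0 hs.2, B.xst_subExcursion hm0 ht.2, cdel, cdel,
    B.jump_subExcursion ⟨hm0, hm1⟩]

theorem dT_embed {s t : ℝ} (hs : s ∈ Ico (0:ℝ) 1) (ht : t ∈ Ico (0:ℝ) 1) :
    dT f (B.embed s) (B.embed t) = dT (subExcursion f u v) s t := by
  have hh := B.isExcursion_subExcursion
  rw [dT, dT, B.mrca_embed hs ht,
    B.dTanc_embed (hh.mrca_nonneg hs.1 ht.1) (hh.mrca_le_left hs.1 ht.1) hs.2,
    B.dTanc_embed (hh.mrca_nonneg hs.1 ht.1) (hh.mrca_le_right hs.1 ht.1) ht.2]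

/-! ### Pairs with one point in `[u,v)` -/

theorem infIcc_subExcursion_one {r : ℝ} (hr : r ≤ 1) : infIcc (subExcursion f u v) r 1 = 0 :=
  le_antisymm ((B.isExcursion_subExcursion.infIcc_le ⟨hr, le_rfl⟩).trans_eq
    (subExcursion_of_notMem fun h => h.2.false)) (B.isExcursion_subExcursion.infIcc_nonneg r 1)

theorem xst_subExcursion_one (r : ℝ) : xst (subExcursion f u v) r 1 = 0 := by
  by_cases hr : r ≤ 1
  · exact xst_eq_zero ((B.infIcc_subExcursion_one hr).trans_le
      (B.isExcursion_subExcursion.lm_nonneg r))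
  · rw [xst, if_neg hr]

theorem pre_subExcursion_one_iff {r : ℝ} (hr : r ∈ Icc (0:ℝ) 1) :
    pre (subExcursion f u v) r 1 ↔ lm f (B.embed r) = lm f u := by
  rw [pre, B.infIcc_subExcursion_one hr.2, B.lm_subExcursion hr, sub_nonpos]
  exact ⟨fun h => le_antisymm h.2 (B.lm_le_lm (B.embed_mem_Icc hr)), fun h => ⟨hr.2, h.le⟩⟩

theorem lm_embed_mrca_one {s : ℝ} (hs : s ∈ Ico (0:ℝ) 1) :
    lm f (B.embed (mrca (subExcursion f u v) s 1)) = lm f u := by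
  have hh := B.isExcursion_subExcursion
  exact (B.pre_subExcursion_one_iff ⟨hh.mrca_nonneg hs.1 zero_le_one,
    (hh.mrca_le_right hs.1 zero_le_one)⟩).1 (hh.pre_mrca hs.1 zero_le_one).2

theorem dL_subExcursion_one (s : ℝ) :
    dL (subExcursion f u v) s 1 =
      cdel (subExcursion f u v) (mrca (subExcursion f u v) s 1)
        (xst (subExcursion f u v) (mrca (subExcursion f u v) s 1) s) 0 +
      dO (subExcursion f u v) (mrca (subExcursion f u v) s 1) s := by
  have hO : dO (subExcursion f u v) (mrca (subExcursion f u v) s 1) 1 = 0 := by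
    rw [dO_eq_tsum]
    exact (tsum_congr fun r => isLineWeight_loopWeight.lineTerm_eq_zero
      B.isExcursion_subExcursion fun _ => B.xst_subExcursion_one r).trans tsum_zero
  rw [dL, hO, B.xst_subExcursion_one, add_zero]

theorem dT_subExcursion_one {s : ℝ} (hs : 0 ≤ s) :
    dT (subExcursion f u v) s 1 =
      dTanc (subExcursion f u v) (mrca (subExcursion f u v) s 1) s := by
  have hT : dTanc (subExcursion f u v) (mrca (subExcursion f u v) s 1) 1 = 0 := by
    rw [dTanc_eq_sub_tsum, subExcursion_of_notMem fun h => h.2.false,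
      B.infIcc_subExcursion_one (B.isExcursion_subExcursion.mrca_le_right hs zero_le_one),
      (tsum_congr fun r => isLineWeight_snd.lineTerm_eq_zero
        B.isExcursion_subExcursion fun _ => B.xst_subExcursion_one r).trans tsum_zero]
    ring
  rw [dT, hT, add_zero]

theorem mrca_prune_of_pre {a : ℝ} (ha : 0 ≤ a) (ha' : a ∉ Ico u v) (hua : pre f u a) :
    mrca (prune f u v) a u = u :=
  le_antisymm (B.isExcursion_prune.mrca_le_right ha B.nonneg)
    (le_mrca B.nonneg ((B.pre_prune_iff (fun h => h.1.false) (Or.inr ha')).2 hua)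
      (B.isExcursion_prune.pre_self u))

theorem mrca_embed_of_pre {s a : ℝ} (hs : s ∈ Ico (0:ℝ) 1) (ha : 0 ≤ a)
    (ha' : a ∉ Ico u v) (hua : pre f u a) :
    mrca f (B.embed s) a = B.embed (mrca (subExcursion f u v) s 1) := by
  have hh := B.isExcursion_subExcursion
  have hva : v ≤ a := not_lt.1 fun h => ha' ⟨hua.1, h⟩
  have hρ0 := hh.mrca_nonneg hs.1 zero_le_one
  have hρs := (hh.pre_mrca hs.1 zero_le_one).1
  have hρI := B.embed_mem_Icc ⟨hρ0, hρs.1.trans hs.2.le⟩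
  refine le_antisymm ?_ (le_mrca (B.embed_nonneg hρ0) ((B.pre_subExcursion_iff hρ0 hs.2).1 hρs)
    ((B.pre_iff_of_lm_eq hρI (B.lm_embed_mrca_one hs) (hρI.2.trans hva)).2 hua))
  have hu : u ≤ mrca f (B.embed s) a :=
    le_mrca B.nonneg (B.pre_embed (Ico_subset_Icc_self hs)) hua
  obtain ⟨hfp, hfa⟩ := B.exc.pre_mrca (B.embed_nonneg hs.1) ha
  obtain ⟨z, hz0, hz⟩ := B.exists_embed_eq hu
  rw [← hz] at hfp hfa ⊢
  have hz1 : z < 1 := (B.embed.le_iff_le.1 hfp.1).trans_lt hs.2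
  refine B.embed.monotone (le_mrca hz0 ((B.pre_subExcursion_iff hz0 hs.2).2 hfp)
    ((B.pre_subExcursion_one_iff ⟨hz0, hz1.le⟩).2 ?_))
  exact le_antisymm (hfa.2.trans (B.infIcc_le_lm_of_lt (B.embed_mem_Ico ⟨hz0, hz1⟩).2 hva))
    (B.lm_le_lm (B.embed_mem_Icc ⟨hz0, hz1.le⟩))

theorem lineTerm_prune_of_pre {F : ℝ → ℝ → ℝ} (hF : IsLineWeight F) {s a : ℝ}
    (hs : s ∈ Ico (0:ℝ) 1) (ha : a ∉ Ico u v) (hua : pre f u a) (r : ℝ) :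
    lineTerm F f (B.embed (mrca (subExcursion f u v) s 1)) a r =
      lineTerm F (prune f u v) u a r := by
  have hh := B.isExcursion_subExcursion
  have hva : v ≤ a := not_lt.1 fun h => ha ⟨hua.1, h⟩
  have hρI := B.embed_mem_Ico ⟨hh.mrca_nonneg hs.1 zero_le_one,
    (hh.mrca_le_left hs.1 zero_le_one).trans_lt hs.2⟩
  rcases le_or_gt r u with hru | hur
  · rw [lineTerm, lineTerm, if_neg fun h => (h.2.1.trans_le hru).not_ge hρI.1,
      if_neg fun h => (h.2.1.trans_le hru).false]
  by_cases hrv : r < v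
  · rw [hF.lineTerm_eq_zero B.exc fun _ => B.xst_eq_zero_of_mem_Ico ⟨hur.le, hrv⟩ hva,
      hF.lineTerm_eq_zero B.isExcursion_prune fun _ => B.xst_prune_eq_zero ⟨hur.le, hrv⟩ a]
  have hr : r ∉ Ico u v := fun h => hrv h.2
  have hr' : r ∉ Ioo u v := fun h => hrv h.2
  refine lineTerm_congr ?_ fun _ =>
    ⟨(B.jump_prune_of_notMem hr).symm, (B.xst_prune hr' (Or.inr ha)).symm⟩
  rw [B.pre_iff_of_lm_eq (Ico_subset_Icc_self hρI) (B.lm_embed_mrca_one hs)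
      (hρI.2.le.trans (not_lt.1 hrv)),
    B.pre_prune_iff (fun h => h.1.false) (Or.inr hr), B.pre_prune_iff hr' (Or.inr ha)]
  exact and_congr_right fun _ =>
    and_congr (iff_of_true (hρI.2.trans_le (not_lt.1 hrv)) hur) Iff.rfl

theorem dL_dT_embed_of_pre {s a : ℝ} (hs : s ∈ Ico (0:ℝ) 1)
    (ha : 0 ≤ a) (ha' : a ∉ Ico u v) (hua : pre f u a) :
    dL f (B.embed s) a = dL (prune f u v) a u + dL (subExcursion f u v) s 1 ∧
    dT f (B.embed s) a = dT (prune f u v) a u + dT (subExcursion f u v) s 1 := by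
  have hh := B.isExcursion_subExcursion
  have hva : v ≤ a := not_lt.1 fun h => ha' ⟨hua.1, h⟩
  have hρ0 := hh.mrca_nonneg hs.1 zero_le_one
  have hρs := (hh.pre_mrca hs.1 zero_le_one).1
  have hρ1 : mrca (subExcursion f u v) s 1 < 1 := hρs.1.trans_lt hs.2
  have hρI := B.embed_mem_Ico ⟨hρ0, hρ1⟩
  have hu : u ∈ Ico u v := ⟨le_rfl, B.lt⟩
  have hρa : pre f (B.embed (mrca (subExcursion f u v) s 1)) a :=
    (B.pre_iff_of_lm_eq (Ico_subset_Icc_self hρI) (B.lm_embed_mrca_one hs)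
      (hρI.2.le.trans hva)).2 hua
  have hOa : dO f (B.embed (mrca (subExcursion f u v) s 1)) a = dO (prune f u v) u a := by
    simp only [dO_eq_tsum, B.lineTerm_prune_of_pre isLineWeight_loopWeight hs ha' hua]
  have hTa : dTanc f (B.embed (mrca (subExcursion f u v) s 1)) a = dTanc (prune f u v) u a := by
    rw [dTanc_eq_sub_tsum, dTanc_eq_sub_tsum,
      tsum_congr (B.lineTerm_prune_of_pre isLineWeight_snd hs ha' hua), prune_of_notMem ha',
      B.infIcc_prune hua.1 (Or.inr ha'), B.infIcc_eq_lm_of_pre hρI hva hρa,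
      B.infIcc_eq_lm_of_pre hu hva hua]
  rw [dL, dL, dT, dT, B.mrca_prune_of_pre ha ha' hua, B.mrca_embed_of_pre hs ha ha' hua,
    B.dL_subExcursion_one, B.dT_subExcursion_one hs.1, hOa, hTa]
  constructor
  · rw [B.xst_eq_zero_of_mem_Ico hρI hva, B.dO_embed hρ0 hs.2, B.xst_prune_eq_zero hu,
      B.xst_prune_eq_zero hu, cdel_self (B.isExcursion_prune.zero_le_jump u), dO_self, cdel, cdel,
      B.jump_subExcursion ⟨hρ0, hρ1⟩, B.xst_subExcursion hρ0 hs.2]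
    ring
  · rw [B.dTanc_embed hρ0 hρs.1 hs.2, B.isExcursion_prune.dTanc_self]
    ring

theorem mrca_eq_of_not_pre {s a : ℝ} (hs : s ∈ Ico (0:ℝ) 1) (ha : 0 ≤ a)
    (ha' : a ∉ Ico u v) (hua : ¬pre f u a) :
    mrca (prune f u v) a u = mrca f (B.embed s) a ∧ mrca f (B.embed s) a < u := by
  have hp := B.embed_mem_Ico hs
  have hp0 := B.embed_nonneg hs.1
  have hf : ∀ r, pre f r (B.embed s) → pre f r a → r < u := fun r hrp hra =>
    not_le.1 fun hur => hua (B.pre_of_mem_Icc ⟨hur, hrp.1.trans hp.2.le⟩ hra)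
  have hg : ∀ r, pre (prune f u v) r a → pre (prune f u v) r u → r < u := fun r hra hru =>
    lt_of_le_of_ne hru.1 fun hr => hua <|
      (B.pre_prune_iff (fun h => h.1.false) (Or.inr ha')).1 (hr ▸ hra)
  have hiff : ∀ r < u, pre (prune f u v) r a ∧ pre (prune f u v) r u ↔
      pre f r (B.embed s) ∧ pre f r a := fun r hr => by
    rw [B.pre_prune_iff (fun h => h.1.not_gt hr) (Or.inl hr),
      B.pre_prune_iff_of_lt hr (Ico_subset_Icc_self hp), and_comm]
  obtain ⟨hfp, hfa⟩ := B.exc.pre_mrca hp0 ha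
  obtain ⟨hga, hgu⟩ := B.isExcursion_prune.pre_mrca ha B.nonneg
  have hmf := hf _ hfp hfa
  obtain ⟨h1, h2⟩ := (hiff _ (hg _ hga hgu)).1 ⟨hga, hgu⟩
  obtain ⟨h3, h4⟩ := (hiff _ hmf).2 ⟨hfp, hfa⟩
  exact ⟨le_antisymm (le_mrca (B.isExcursion_prune.mrca_nonneg ha B.nonneg) h1 h2)
    (le_mrca (B.exc.mrca_nonneg hp0 ha) h3 h4), hmf⟩

theorem indicator_lineTerm_Iio {F : ℝ → ℝ → ℝ} (hF : IsLineWeight F) {s m : ℝ}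
    (hs : s ∈ Ico (0:ℝ) 1) (hm : m < u) (r : ℝ) :
    (Iio u).indicator (lineTerm F f m (B.embed s)) r = lineTerm F (prune f u v) m u r := by
  have hp := Ico_subset_Icc_self (B.embed_mem_Ico hs)
  by_cases hr : r < u
  · rw [indicator_of_mem (mem_Iio.2 hr)]
    refine lineTerm_congr ?_ fun _ =>
      ⟨(B.jump_prune_of_notMem fun h => h.1.not_gt hr).symm, (B.xst_prune_of_lt hr hp).symm⟩
    rw [B.pre_prune_iff (fun h => h.1.not_gt hm) (Or.inl hm), B.pre_prune_iff_of_lt hr hp]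
  · rw [indicator_of_notMem (mt mem_Iio.1 hr), hF.lineTerm_eq_zero B.isExcursion_prune fun hc =>
      B.xst_prune_eq_zero ⟨not_lt.1 hr, hc.2.2.1.trans_lt B.lt⟩ u]

theorem indicator_lineTerm_Ici_embed {F : ℝ → ℝ → ℝ} (hF : IsLineWeight F) {s m : ℝ}
    (hs : s ∈ Ico (0:ℝ) 1) (hm : m < u) (hmp : pre f m (B.embed s)) (r : ℝ) :
    (Ici u).indicator (lineTerm F f m (B.embed s)) (B.embed r) =
      (if r = mrca (subExcursion f u v) s 1 then
        F (jump (subExcursion f u v) (mrca (subExcursion f u v) s 1))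
          (xst (subExcursion f u v) (mrca (subExcursion f u v) s 1) s) else 0) +
      lineTerm F (subExcursion f u v) (mrca (subExcursion f u v) s 1) s r := by
  have hh := B.isExcursion_subExcursion
  set ρ := mrca (subExcursion f u v) s 1
  have hρ0 : 0 ≤ ρ := hh.mrca_nonneg hs.1 zero_le_one
  have hρs : pre (subExcursion f u v) ρ s := (hh.pre_mrca hs.1 zero_le_one).1
  have hρI := B.embed_mem_Icc ⟨hρ0, hρs.1.trans hs.2.le⟩
  have hlm : lm f (B.embed ρ) = lm f u := B.lm_embed_mrca_one hs
  rcases lt_or_ge r 0 with hr0 | hr0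
  · rw [indicator_of_notMem fun h => (B.embed.strictMono hr0).not_ge
        (B.embed_zero.trans_le (mem_Ici.1 h)),
      if_neg (hr0.trans_le hρ0).ne, lineTerm_of_not_lt _ _ (hr0.trans_le hρ0).not_gt, add_zero]
  have hmx : ∀ x ∈ Icc u (B.embed s), pre f m x ∧ m < x := fun x hx =>
    ⟨⟨hm.le.trans hx.1, hmp.2.trans (B.exc.infIcc_mono le_rfl hx.2 (hm.le.trans hx.1))⟩,
      hm.trans_le hx.1⟩
  have hur : u ≤ B.embed r := B.embed_zero.symm.trans_le (B.embed.monotone hr0)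
  rw [indicator_of_mem (mem_Ici.2 hur)]
  rcases lt_trichotomy r ρ with hrρ | rfl | hρr
  · rw [if_neg hrρ.ne, lineTerm_of_not_lt _ _ hrρ.not_gt, add_zero]
    exact hF.lineTerm_eq_zero B.exc fun _ => B.xst_eq_zero_of_lm_eq hur (B.embed.strictMono hrρ)
      (B.embed.monotone hρs.1) hρI.2 hlm
  · have hρx := hmx _ ⟨hρI.1, B.embed.monotone hρs.1⟩
    rw [if_pos rfl, lineTerm_of_not_lt _ _ (lt_irrefl _), add_zero, lineTerm,
      if_pos ⟨hρx.1, hρx.2, (B.pre_subExcursion_iff hρ0 hs.2).1 hρs⟩,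
      B.jump_subExcursion ⟨hρ0, hρs.1.trans_lt hs.2⟩, B.xst_subExcursion hρ0 hs.2]
  · rw [if_neg hρr.ne', zero_add, ← B.lineTerm_embed F hρ0 hs.2 r]
    refine lineTerm_congr ?_ fun _ => ⟨rfl, rfl⟩
    by_cases hrs : r ≤ s
    · have hx := hmx _ ⟨hur, B.embed.monotone hrs⟩
      refine and_congr (iff_of_true hx.1 ?_) (and_congr (iff_of_true hx.2
        (B.embed.strictMono hρr)) Iff.rfl)
      exact (B.pre_iff_of_lm_eq hρI hlm (B.embed.monotone hρr.le)).2
        (B.pre_embed ⟨hr0, hrs.trans hs.2.le⟩)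
    · exact iff_of_false (fun h => hrs (B.embed.le_iff_le.1 h.2.2.1))
        fun h => hrs (B.embed.le_iff_le.1 h.2.2.1)

theorem tsum_lineTerm_split {F : ℝ → ℝ → ℝ} (hF : IsLineWeight F) {s m : ℝ}
    (hs : s ∈ Ico (0:ℝ) 1) (hm : m < u) (hmp : pre f m (B.embed s)) :
    ∑' r, lineTerm F f m (B.embed s) r = ∑' r, lineTerm F (prune f u v) m u r +
      (F (jump (subExcursion f u v) (mrca (subExcursion f u v) s 1))
        (xst (subExcursion f u v) (mrca (subExcursion f u v) s 1) s) +
      ∑' r, lineTerm F (subExcursion f u v) (mrca (subExcursion f u v) s 1) s r) := by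
  have hT := B.exc.summable_lineTerm hF m (B.embed s)
  have hIci : ∑' r, (Ici u).indicator (lineTerm F f m (B.embed s)) r =
      F (jump (subExcursion f u v) (mrca (subExcursion f u v) s 1))
        (xst (subExcursion f u v) (mrca (subExcursion f u v) s 1) s) +
      ∑' r, lineTerm F (subExcursion f u v) (mrca (subExcursion f u v) s 1) s r := by
    rw [← B.embed.toEquiv.tsum_eq]
    simp only [OrderIso.coe_toEquiv, B.indicator_lineTerm_Ici_embed hF hs hm hmp]
    rw [(hasSum_ite_eq _ _).summable.tsum_add (B.isExcursion_subExcursion.summable_lineTerm hF _ _),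
      tsum_ite_eq]
  rw [← hIci, ← tsum_congr (B.indicator_lineTerm_Iio hF hs hm),
    ← (hT.indicator _).tsum_add (hT.indicator _), ← compl_Iio]
  simp only [indicator_self_add_compl_apply]

theorem dL_dT_embed_of_not_pre {s a : ℝ} (hs : s ∈ Ico (0:ℝ) 1)
    (ha : 0 ≤ a) (ha' : a ∉ Ico u v) (hua : ¬pre f u a) :
    dL f (B.embed s) a = dL (prune f u v) a u + dL (subExcursion f u v) s 1 ∧
    dT f (B.embed s) a = dT (prune f u v) a u + dT (subExcursion f u v) s 1 := by
  obtain ⟨hmg, hmu⟩ := B.mrca_eq_of_not_pre hs ha ha' hua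
  obtain ⟨hmp, hma⟩ := B.exc.pre_mrca (B.embed_nonneg hs.1) ha
  have hm : mrca f (B.embed s) a ∉ Ioo u v := fun h => h.1.not_gt hmu
  have hp := Ico_subset_Icc_self (B.embed_mem_Ico hs)
  rw [dL, dL, dT, dT, hmg, B.dL_subExcursion_one, B.dT_subExcursion_one hs.1]
  constructor
  · have hsplit := B.tsum_lineTerm_split isLineWeight_loopWeight hs hmu hmp
    rw [← dO_eq_tsum, ← dO_eq_tsum, ← dO_eq_tsum] at hsplit
    rw [hsplit, B.dO_prune hm ha', B.xst_prune_of_lt hmu hp, B.xst_prune hm (Or.inl hmu),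
      cdel_comm (prune f u v), cdel, cdel, B.jump_prune_of_notMem fun h => h.1.not_gt hmu,
      cdel_comm (subExcursion f u v)]
    simp only [cdel, loopWeight]
    ring
  · have hh := B.isExcursion_subExcursion
    have hρ0 := hh.mrca_nonneg hs.1 zero_le_one
    have hρs := (hh.pre_mrca hs.1 zero_le_one).1
    rw [B.dTanc_prune hm hma.1 ha', dTanc_eq_sub_tsum, dTanc_eq_sub_tsum (φ := prune f u v),
      dTanc_eq_sub_tsum (φ := subExcursion f u v),
      B.tsum_lineTerm_split isLineWeight_snd hs hmu hmp, B.xst_subExcursion hρ0 hs.2,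
      xst_of_pre ((B.pre_subExcursion_iff hρ0 hs.2).1 hρs), B.lm_embed_mrca_one hs,
      prune_of_mem ⟨le_rfl, B.lt⟩, B.infIcc_prune hmu.le (Or.inl hmu),
      B.infIcc_eq_infIcc_left hmu hp, B.subExcursion_of_mem hs,
      B.infIcc_subExcursion hρ0 hρs.1 hs.2]
    ring

theorem dL_dT_embed {s a : ℝ} (hs : s ∈ Ico (0:ℝ) 1) (ha : 0 ≤ a) (ha' : a ∉ Ico u v) :
    dL f (B.embed s) a = dL (prune f u v) a u + dL (subExcursion f u v) s 1 ∧
    dT f (B.embed s) a = dT (prune f u v) a u + dT (subExcursion f u v) s 1 := by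
  by_cases hua : pre f u a
  · exact B.dL_dT_embed_of_pre hs ha ha' hua
  · exact B.dL_dT_embed_of_not_pre hs ha ha' hua

end IsSubExcursion

theorem statement6 (f : ℝ → ℝ) (hf : IsExcursion f) (u v : ℝ)
    (hu : u ∈ Icc (0:ℝ) 1) (hv : v ∈ Icc (0:ℝ) 1)
    (huv : pre f u v) (hlt : u < v) (hlm : lm f u = lm f v)
    (g h : ℝ → ℝ)
    (hg : ∀ t, g t = if t ∈ Ico u v then lm f u else f t)
    (hh : ∀ t, h t = if t ∈ Ico (0:ℝ) 1 then f (u + t * (v - u)) - lm f u else 0) :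
    IsExcursion g ∧ IsExcursion h ∧
    (∀ a ∈ Icc (0:ℝ) 1 \ Ico u v, ∀ b ∈ Icc (0:ℝ) 1 \ Ico u v,
        dL f a b = dL g a b ∧ dT f a b = dT g a b) ∧
    (∀ s ∈ Ico (0:ℝ) 1, ∀ t ∈ Ico (0:ℝ) 1,
        dL f (u + s * (v - u)) (u + t * (v - u)) = dL h s t ∧
        dT f (u + s * (v - u)) (u + t * (v - u)) = dT h s t) ∧
    (∀ s ∈ Ico (0:ℝ) 1, ∀ a ∈ Icc (0:ℝ) 1 \ Ico u v,
        dL f (u + s * (v - u)) a = dL g a u + dL h s 1 ∧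
        dT f (u + s * (v - u)) a = dT g a u + dT h s 1) := by
  obtain rfl : g = prune f u v := funext hg
  obtain rfl : h = subExcursion f u v := funext hh
  have B : IsSubExcursion f u v := ⟨hf, hu.1, hv.2, huv, hlt, hlm⟩
  exact ⟨B.isExcursion_prune, B.isExcursion_subExcursion,
    fun a ha b hb => ⟨B.dL_prune ha.1.1 hb.1.1 ha.2 hb.2, B.dT_prune ha.1.1 hb.1.1 ha.2 hb.2⟩,
    fun s hs t ht => ⟨B.dL_embed hs ht, B.dT_embed hs ht⟩,
    fun s hs a ha => B.dL_dT_embed hs ha.1.1 ha.2⟩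
end
end

section
/- Let f be an excursion. If there exists a partition 0 = r_0 < r_1 < ... < r_n < r_{n+1} = 1 such that f is non-increasing on [r_i, r_{i+1}) for every 0 ≤ i ≤ n, then f is a pure jump growth (PJG) excursion, i.e. f(t) = ∑_{r ⪯_f t} x_r^t(f) for all t ∈ [0,1]. -/
open Set Filter Topology
open scoped Classical

noncomputable section

/-! On a piece `[r i, r (i+1))` the function is non-increasing, so
`f(s−) ≥ f s ≥ inf_{[s,t]} f` at every interior point `s` and `x_s^t = 0`; only the partition
points `r 0, …, r k` below `t` contribute to `Jf(t)`. Writing `g i = inf_{[r i, t]} f`, the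
contribution of `r i` is `g i - min (f(r i −)) (g i)`, and `min (f(r (i+1) −)) (g (i+1)) = g i`
because `f(r (i+1) −)` is the infimum of `f` over `[r i, r (i+1))`. Hence the sum telescopes to
`g k = f t`. -/

lemma exists_mem_Ico_of_mem_Ico (r : ℕ → ℝ) (n : ℕ) {s : ℝ}
    (hs : s ∈ Ico (r 0) (r (n + 1))) :
    ∃ j ≤ n, s ∈ Ico (r j) (r (j + 1)) := by
  induction n with
  | zero => exact ⟨0, le_rfl, hs⟩
  | succ n ih =>
    by_cases hsn : s < r (n + 1)
    · obtain ⟨j, hj, hsj⟩ := ih ⟨hs.1, hsn⟩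
      exact ⟨j, by omega, hsj⟩
    · exact ⟨n + 1, le_rfl, not_lt.1 hsn, hs.2⟩

lemma AntitoneOn.isGLB_image_Ico_of_tendsto {f : ℝ → ℝ} {a b L : ℝ}
    (hdec : AntitoneOn f (Ico a b)) (hab : a < b) (hL : Tendsto f (𝓝[<] b) (𝓝 L)) :
    IsGLB (f '' Ico a b) L := by
  refine ⟨?_, fun m hm => ?_⟩
  · rintro _ ⟨u, hu, rfl⟩
    refine le_of_tendsto hL ?_
    filter_upwards [Ioo_mem_nhdsLT_of_mem (show b ∈ Ioc u b from ⟨hu.2, le_rfl⟩)] with w hw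
    exact hdec hu ⟨hu.1.trans hw.1.le, hw.2⟩ hw.1.le
  · refine ge_of_tendsto hL ?_
    filter_upwards [Ioo_mem_nhdsLT_of_mem (show b ∈ Ioc a b from ⟨hab, le_rfl⟩)] with w hw
    exact hm ⟨w, ⟨hw.1.le, hw.2⟩, rfl⟩

lemma infIcc_eq_of_antitoneOn {f : ℝ → ℝ} {a b t : ℝ} (hdec : AntitoneOn f (Ico a b))
    (hat : a ≤ t) (htb : t < b) : infIcc f a t = f t := by
  refine IsLeast.csInf_eq ⟨⟨t, ⟨hat, le_rfl⟩, rfl⟩, ?_⟩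
  rintro _ ⟨u, hu, rfl⟩
  exact hdec ⟨hu.1, hu.2.trans_lt htb⟩ ⟨hat, htb⟩ hu.2

lemma ite_pre_xst_eq_sub_min {f : ℝ → ℝ} {s t : ℝ} (hst : s ≤ t) :
    (if pre f s t then xst f s t else 0) = infIcc f s t - min (lm f s) (infIcc f s t) := by
  simp only [pre, xst, hst, true_and, if_true]
  split_ifs with h
  · rw [min_eq_left h, max_eq_left (sub_nonneg.2 h)]
  · rw [min_eq_right (not_le.1 h).le, sub_self]

lemma ite_pre_xst_eq_zero {f : ℝ → ℝ} {s t : ℝ} (h : s ≤ t → infIcc f s t ≤ lm f s) :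
    (if pre f s t then xst f s t else 0) = 0 := by
  by_cases hst : s ≤ t
  · rw [ite_pre_xst_eq_sub_min hst, min_eq_right (h hst), sub_self]
  · exact if_neg fun hp => hst hp.1

namespace IsExcursion

variable {f : ℝ → ℝ}

lemma nonneg' (hf : IsExcursion f) (s : ℝ) : 0 ≤ f s := by
  by_cases hs : s ∈ Icc (0:ℝ) 1
  · exact hf.nonneg s hs
  · rw [hf.zero_outside s hs]

lemma bddBelow_image (hf : IsExcursion f) (S : Set ℝ) : BddBelow (f '' S) :=
  ⟨0, by rintro _ ⟨y, -, rfl⟩; exact hf.nonneg' y⟩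

lemma infIcc_le_s8 (hf : IsExcursion f) {a b x : ℝ} (hx : x ∈ Icc a b) : infIcc f a b ≤ f x :=
  csInf_le (hf.bddBelow_image _) ⟨x, hx, rfl⟩

lemma infIcc_nonneg_s8 (hf : IsExcursion f) (a b : ℝ) : 0 ≤ infIcc f a b :=
  Real.sInf_nonneg (by rintro _ ⟨y, -, rfl⟩; exact hf.nonneg' y)

lemma tendsto_lm (hf : IsExcursion f) {s : ℝ} (hs : s ∈ Ioc (0:ℝ) 1) :
    Tendsto f (𝓝[<] s) (𝓝 (lm f s)) := by
  rw [lm, if_neg hs.1.ne']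
  exact hf.leftLimEx s hs

lemma lm_nonneg_s8 (hf : IsExcursion f) (s : ℝ) : 0 ≤ lm f s := by
  by_cases hs : s ∈ Ioc (0:ℝ) 1
  · exact ge_of_tendsto (hf.tendsto_lm hs) (Eventually.of_forall hf.nonneg')
  have hout : (Icc (0:ℝ) 1)ᶜ ∈ 𝓝[<] s := by
    rcases le_or_gt s 0 with hs0 | hs0
    · exact mem_of_superset self_mem_nhdsWithin fun u hu hu' => (hu.trans_le hs0).not_ge hu'.1
    · have hs1 : 1 < s := not_le.1 fun h => hs ⟨hs0, h⟩
      exact mem_nhdsWithin_of_mem_nhds <|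
        mem_of_superset (Ioi_mem_nhds hs1) fun u hu hu' => (hu.trans_le hu'.2).false
  have hzero : Tendsto f (𝓝[<] s) (𝓝 0) :=
    tendsto_const_nhds.congr' (eventually_of_mem hout fun u hu => (hf.zero_outside u hu).symm)
  unfold lm
  split_ifs
  · exact le_rfl
  · rw [leftLim_eq_of_tendsto hzero]

lemma le_lm_of_antitoneOn (hf : IsExcursion f) {a b s : ℝ} (ha : 0 ≤ a) (hb : b ≤ 1)
    (hdec : AntitoneOn f (Ico a b)) (hs : s ∈ Ioo a b) : f s ≤ lm f s := by
  refine ge_of_tendsto (hf.tendsto_lm ⟨ha.trans_lt hs.1, hs.2.le.trans hb⟩) ?_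
  filter_upwards [Ioo_mem_nhdsLT_of_mem (show s ∈ Ioc a s from ⟨hs.1, le_rfl⟩)] with u hu
  exact hdec ⟨hu.1.le, hu.2.trans hs.2⟩ ⟨hs.1.le, hs.2⟩ hu.2.le

lemma infIcc_eq_min_lm (hf : IsExcursion f) {a b c : ℝ} (ha : 0 ≤ a) (hab : a < b)
    (hb : b ≤ 1) (hbc : b ≤ c) (hdec : AntitoneOn f (Ico a b)) :
    infIcc f a c = min (lm f b) (infIcc f b c) := by
  have hne : (f '' Ico a b).Nonempty := (nonempty_Ico.2 hab).image f
  rw [infIcc, ← Ico_union_Icc_eq_Icc hab.le hbc, image_union,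
    csInf_union (hf.bddBelow_image _) hne (hf.bddBelow_image _) ((nonempty_Icc.2 hbc).image f),
    (hdec.isGLB_image_Ico_of_tendsto hab (hf.tendsto_lm ⟨ha.trans_lt hab, hb⟩)).csInf_eq hne]
  rfl

lemma Jop_one (hf : IsExcursion f) : Jop f 1 = 0 := by
  refine (tsum_congr fun s => ite_pre_xst_eq_zero fun hs => ?_).trans tsum_zero
  calc infIcc f s 1 ≤ f 1 := hf.infIcc_le_s8 ⟨hs, le_rfl⟩
    _ = 0 := hf.one
    _ ≤ lm f s := hf.lm_nonneg_s8 s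

lemma sum_range_ite_pre_xst_eq_infIcc (hf : IsExcursion f) {r : ℕ → ℝ} {m : ℕ} {t : ℝ}
    (h0 : r 0 = 0) (hr : StrictMonoOn r (Iic m)) (hmt : r m ≤ t) (ht : t ≤ 1)
    (hdec : ∀ i < m, AntitoneOn f (Ico (r i) (r (i + 1)))) :
    ∑ i ∈ Finset.range (m + 1), (if pre f (r i) t then xst f (r i) t else 0)
      = infIcc f (r m) t := by
  induction m with
  | zero =>
    rw [Finset.sum_range_one, ite_pre_xst_eq_sub_min hmt, h0, lm, if_pos rfl,
      min_eq_left (hf.infIcc_nonneg_s8 _ _), sub_zero]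
  | succ m ih =>
    have hm : r m < r (m + 1) := hr m.le_succ self_mem_Iic (lt_add_one m)
    have hrm : 0 ≤ r m := h0 ▸ hr.monotoneOn (Nat.zero_le _) m.le_succ (Nat.zero_le m)
    rw [Finset.sum_range_succ, ih (hr.mono (Iic_subset_Iic.2 m.le_succ)) (hm.le.trans hmt)
      (fun i hi => hdec i (by omega)), ite_pre_xst_eq_sub_min hmt,
      ← hf.infIcc_eq_min_lm hrm hm (hmt.trans ht) hmt (hdec m (lt_add_one m))]
    ring

lemma ite_pre_xst_eq_zero_of_ne (hf : IsExcursion f) {r : ℕ → ℝ} {n k : ℕ} {s t : ℝ}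
    (h0 : r 0 = 0) (hlast : r (n + 1) = 1) (hr : StrictMonoOn r (Iic (n + 1)))
    (hdec : ∀ i ≤ n, AntitoneOn f (Ico (r i) (r (i + 1)))) (hk : k ≤ n) (htk : t < r (k + 1))
    (hs : ∀ i ≤ k, r i ≠ s) :
    (if pre f s t then xst f s t else 0) = 0 := by
  refine ite_pre_xst_eq_zero fun hst => ?_
  have hinf : infIcc f s t ≤ f s := hf.infIcc_le_s8 ⟨le_rfl, hst⟩
  rcases lt_or_ge s 0 with hs0 | hs0
  · rw [hf.zero_outside s fun h => hs0.not_ge h.1] at hinf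
    exact hinf.trans (hf.lm_nonneg_s8 s)
  have hr01 (i : ℕ) (hi : i ≤ n + 1) : r i ∈ Icc (0:ℝ) 1 :=
    ⟨h0 ▸ hr.monotoneOn (Nat.zero_le _) hi (Nat.zero_le i),
      hlast ▸ hr.monotoneOn hi self_mem_Iic hi⟩
  have hrk : r (k + 1) ≤ 1 := (hr01 (k + 1) (by omega)).2
  obtain ⟨j, hj, hsj⟩ := exists_mem_Ico_of_mem_Ico r n (s := s)
    (by rw [h0, hlast]; exact ⟨hs0, (hst.trans_lt htk).trans_le hrk⟩)
  have hjk : j ≤ k := Nat.lt_succ_iff.1 <| (hr.lt_iff_lt (by omega : j ≤ n + 1)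
    (by omega : k + 1 ≤ n + 1)).1 (hsj.1.trans_lt (hst.trans_lt htk))
  exact hinf.trans <|
    hf.le_lm_of_antitoneOn (hr01 j (by omega)).1 (hr01 (j + 1) (by omega)).2 (hdec j hj)
    ⟨lt_of_le_of_ne hsj.1 (hs j hjk), hsj.2⟩

end IsExcursion

theorem statement8 (f : ℝ → ℝ) (hf : IsExcursion f) (n : ℕ) (r : ℕ → ℝ)
    (h0 : r 0 = 0) (hlast : r (n + 1) = 1)
    (hmono : ∀ i ≤ n, r i < r (i + 1))
    (hdec : ∀ i ≤ n, AntitoneOn f (Ico (r i) (r (i + 1)))) :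
    IsPJG f := by
  have hr : StrictMonoOn r (Iic (n + 1)) :=
    strictMonoOn_Iic_of_lt_succ fun i hi => hmono i (Nat.lt_succ_iff.1 hi)
  intro t ht
  rcases ht.2.eq_or_lt with rfl | ht1
  · rw [hf.one, hf.Jop_one]
  obtain ⟨k, hk, htk⟩ :=
    exists_mem_Ico_of_mem_Ico r n (s := t) (by rw [h0, hlast]; exact ⟨ht.1, ht1⟩)
  have hsupp (s : ℝ) (hs : s ∉ (Finset.range (k + 1)).image r) :
      (if pre f s t then xst f s t else 0) = 0 :=
    hf.ite_pre_xst_eq_zero_of_ne h0 hlast hr hdec hk htk.2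
      fun i hi his => hs (Finset.mem_image.2 ⟨i, Finset.mem_range.2 (by omega), his⟩)
  have hinj : Set.InjOn r (Finset.range (k + 1)) := hr.injOn.mono fun i hi => by
    simp only [Finset.coe_range, mem_Iio, mem_Iic] at hi ⊢; omega
  rw [Jop, tsum_eq_sum hsupp, Finset.sum_image hinj,
    hf.sum_range_ite_pre_xst_eq_infIcc h0 (hr.mono (Iic_subset_Iic.2 (by omega))) htk.1 ht.2
      fun i hi => hdec i (by omega), infIcc_eq_of_antitoneOn (hdec k hk) htk.1 htk.2]
end
end
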